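/- For every real α ≥ 2 and every real x > 0, (α/(α−1))·(x+1) ≤ ((x+2)^α − x^α)/((x+2)^{α−1} − x^{α−1}). -/

import Mathlib

/-!
With `m = x + 1` and both denominators positive, the inequality says `F x ≤ F (x + 2)` for
`F = potential α m`, i.e. `F t = (α - 1) t ^ α - α m t ^ (α - 1)`. Since
`F' t = α (α - 1) (t - m) t ^ (α - 2)` and `t ^ (α - 2)` is nondecreasing, the derivative of
`s ↦ F (m + s) - F (m - s)` is `α (α - 1) s ((m + s) ^ (α - 2) - (m - s) ^ (α - 2)) ≥ 0`,
so this difference grows from `0`.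
-/

open Real Set

namespace HadamardStep

noncomputable def potential (α m t : ℝ) : ℝ := (α - 1) * t ^ α - α * m * t ^ (α - 1)

variable {α m : ℝ}

lemma continuous_potential (hα : 1 ≤ α) : Continuous (potential α m) := by
  have h₁ := continuous_rpow_const (q := α) (by linarith)
  have h₂ := continuous_rpow_const (q := α - 1) (by linarith)
  unfold potential
  fun_prop

lemma hasDerivAt_potential {t : ℝ} (ht : 0 < t) :
    HasDerivAt (potential α m) (α * (α - 1) * (t - m) * t ^ (α - 2)) t := by
  have h₁ := (hasDerivAt_rpow_const (p := α) (.inl ht.ne')).const_mul (α - 1)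
  have h₂ := (hasDerivAt_rpow_const (p := α - 1) (.inl ht.ne')).const_mul (α * m)
  refine (h₁.sub h₂).congr_deriv ?_
  rw [show α - 1 - 1 = α - 2 by ring, show α - 1 = α - 2 + 1 by ring, rpow_add_one ht.ne']
  ring

lemma monotoneOn_potential_add_sub_potential_sub (hα : 2 ≤ α) :
    MonotoneOn (fun s ↦ potential α m (m + s) - potential α m (m - s)) (Icc 0 m) := by
  refine monotoneOn_of_hasDerivWithinAt_nonneg (convex_Icc 0 m)
    (((continuous_potential (by linarith)).comp (by fun_prop)).sub
      ((continuous_potential (by linarith)).comp (by fun_prop))).continuousOn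
    (f' := fun s ↦ α * (α - 1) * s * ((m + s) ^ (α - 2) - (m - s) ^ (α - 2))) ?_ ?_
  all_goals rw [interior_Icc]; rintro s ⟨hs₀, hsm⟩
  · have hplus := (hasDerivAt_potential (α := α) (m := m) (by linarith : 0 < m + s)).comp s
      ((hasDerivAt_id s).const_add m)
    have hminus := (hasDerivAt_potential (α := α) (m := m) (by linarith : 0 < m - s)).comp s
      ((hasDerivAt_id s).const_sub m)
    refine (hplus.sub hminus).hasDerivWithinAt.congr_deriv ?_
    ring
  · have hpow : (m - s) ^ (α - 2) ≤ (m + s) ^ (α - 2) :=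
      rpow_le_rpow (by linarith) (by linarith) (by linarith)
    have : 0 ≤ α * (α - 1) * s := by
      apply mul_nonneg (mul_nonneg _ _) hs₀.le <;> linarith
    nlinarith

lemma potential_sub_le_potential_add (hα : 2 ≤ α) {s : ℝ} (hs₀ : 0 ≤ s) (hsm : s ≤ m) :
    potential α m (m - s) ≤ potential α m (m + s) := by
  have := monotoneOn_potential_add_sub_potential_sub (m := m) hα
    ⟨le_rfl, hs₀.trans hsm⟩ ⟨hs₀, hsm⟩ hs₀
  simp only [add_zero, sub_zero, sub_self] at this
  linarith

end HadamardStep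

open HadamardStep in
theorem hadamard_step (α : ℝ) (hα : 2 ≤ α) (x : ℝ) (hx : 0 < x) :
    (α / (α - 1)) * (x + 1) ≤ ((x + 2) ^ α - x ^ α) / ((x + 2) ^ (α - 1) - x ^ (α - 1)) := by
  have hF : potential α (x + 1) x ≤ potential α (x + 1) (x + 2) := by
    have := potential_sub_le_potential_add (m := x + 1) hα zero_le_one (by linarith)
    rwa [add_sub_cancel_right, add_assoc, one_add_one_eq_two] at this
  have hden : 0 < (x + 2) ^ (α - 1) - x ^ (α - 1) :=
    sub_pos.2 (rpow_lt_rpow hx.le (by linarith) (by linarith))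
  rw [le_div_iff₀ hden, div_mul_eq_mul_div, div_mul_eq_mul_div, div_le_iff₀ (by linarith)]
  unfold potential at hF
  linarith
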